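/- Let B = (b_{i1...im}) be a symmetric double B-tensor of even order m and dimension n ≥ 2. Then every H-eigenvalue of B is positive. -/

import Mathlib

open Finset

/-- The set of index tuples `(i, i₂, …, i_m)` in row `i` of an order-`m`, dimension-`n`
tensor, i.e. all tuples whose first index is `i`. -/
def rowSet (m n : ℕ) (i : Fin n) : Finset (Fin m → Fin n) :=
  Finset.univ.filter fun α => ∀ t : Fin m, (t : ℕ) = 0 → α t = i

/-- The set of off-diagonal index tuples in row `i`: tuples whose first index is `i`
and whose indices are not all equal to `i` (i.e. `δ_{i i₂ … i_m} = 0`). -/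
def offRowSet (m n : ℕ) (i : Fin n) : Finset (Fin m → Fin n) :=
  Finset.univ.filter fun α => (∀ t : Fin m, (t : ℕ) = 0 → α t = i) ∧ α ≠ fun _ => i

/-- The diagonal entry `b_{i…i}`. -/
def diagEntry {m n : ℕ} (B : (Fin m → Fin n) → ℝ) (i : Fin n) : ℝ :=
  B fun _ => i

/-- `β_i(B) = max {0, b_{i j₂ ⋯ j_m} : δ_{i j₂ … j_m} = 0}`. -/
def betaMax {m n : ℕ} (B : (Fin m → Fin n) → ℝ) (i : Fin n) : ℝ :=
  (offRowSet m n i).fold max 0 B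

/-- `Δ_i(B) = Σ_{δ_{i i₂…i_m} = 0} (β_i(B) - b_{i i₂ ⋯ i_m})`. -/
def DeltaSum {m n : ℕ} (B : (Fin m → Fin n) → ℝ) (i : Fin n) : ℝ :=
  ∑ α ∈ offRowSet m n i, (betaMax B i - B α)

/-- `r_i(B) = Σ_{δ_{i i₂…i_m} = 0} |b_{i i₂ ⋯ i_m}|`. -/
def rowAbsSum {m n : ℕ} (B : (Fin m → Fin n) → ℝ) (i : Fin n) : ℝ :=
  ∑ α ∈ offRowSet m n i, |B α|

/-- The index tuple `(j, i, i, …, i)`. -/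
def spike (m n : ℕ) (j i : Fin n) : Fin m → Fin n :=
  fun t => if (t : ℕ) = 0 then j else i

/-- `Δ_j^i(B) = Δ_j(B) - (β_j(B) - b_{j i⋯i})`. -/
def DeltaSubSum {m n : ℕ} (B : (Fin m → Fin n) → ℝ) (j i : Fin n) : ℝ :=
  DeltaSum B j - (betaMax B j - B (spike m n j i))

/-- `r_j^i(B) = r_j(B) - |b_{j i⋯i}|`. -/
def rowAbsSubSum {m n : ℕ} (B : (Fin m → Fin n) → ℝ) (j i : Fin n) : ℝ :=
  rowAbsSum B j - |B (spike m n j i)|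

/-- `B` is a B-tensor: each row sum is positive and `(1/n^{m-1})` times the row sum
strictly dominates every off-diagonal entry of that row. -/
def IsBTensor {m n : ℕ} (B : (Fin m → Fin n) → ℝ) : Prop :=
  ∀ i : Fin n,
    0 < ∑ α ∈ rowSet m n i, B α ∧
    ∀ α ∈ offRowSet m n i,
      B α < (1 / (n : ℝ) ^ (m - 1)) * ∑ α' ∈ rowSet m n i, B α'

/-- `B` is a double B-tensor. -/
def IsDoubleBTensor {m n : ℕ} (B : (Fin m → Fin n) → ℝ) : Prop :=
  (∀ i, betaMax B i < diagEntry B i) ∧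
  (∀ i, DeltaSum B i ≤ diagEntry B i - betaMax B i) ∧
  (∀ i j, i ≠ j →
    DeltaSum B i * DeltaSum B j <
      (diagEntry B i - betaMax B i) * (diagEntry B j - betaMax B j))

/-- `B` is a quasi-double B-tensor. -/
def IsQuasiDoubleBTensor {m n : ℕ} (B : (Fin m → Fin n) → ℝ) : Prop :=
  (∀ i, betaMax B i < diagEntry B i) ∧
  ∀ i j, i ≠ j →
    (betaMax B j - B (spike m n j i)) * DeltaSum B i <
      (diagEntry B i - betaMax B i) *
        (diagEntry B j - betaMax B j - DeltaSubSum B j i)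

/-- `B` is a Z-tensor: all off-diagonal entries are non-positive. -/
def IsZTensor {m n : ℕ} (B : (Fin m → Fin n) → ℝ) : Prop :=
  ∀ α : Fin m → Fin n, (∃ s t, α s ≠ α t) → B α ≤ 0

/-- `B` is a symmetric tensor: invariant under permutations of the indices. -/
def IsSymmetricTensor {m n : ℕ} (B : (Fin m → Fin n) → ℝ) : Prop :=
  ∀ (σ : Equiv.Perm (Fin m)) (α : Fin m → Fin n), B (α ∘ σ) = B α

/-- `B` is doubly strictly diagonally dominant (for order `m > 2`). -/
def IsDSDD {m n : ℕ} (B : (Fin m → Fin n) → ℝ) : Prop :=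
  (∀ i, rowAbsSum B i ≤ |diagEntry B i|) ∧
  (∀ i j, i ≠ j → rowAbsSum B i * rowAbsSum B j < |diagEntry B i| * |diagEntry B j|)

/-- `B` is quasi-doubly strictly diagonally dominant. -/
def IsQDSDD {m n : ℕ} (B : (Fin m → Fin n) → ℝ) : Prop :=
  ∀ i j, i ≠ j →
    rowAbsSum B i * |B (spike m n j i)| <
      |diagEntry B i| * (|diagEntry B j| - rowAbsSubSum B j i)

/-- `B x^m = Σ b_{i₁⋯i_m} x_{i₁} ⋯ x_{i_m}`. -/
def tensorApply {m n : ℕ} (B : (Fin m → Fin n) → ℝ) (x : Fin n → ℝ) : ℝ :=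
  ∑ α : Fin m → Fin n, B α * ∏ t, x (α t)

/-- `B` is positive definite: `B x^m > 0` for every nonzero `x ∈ ℝ^n`. -/
def IsPosDefTensor {m n : ℕ} (B : (Fin m → Fin n) → ℝ) : Prop :=
  ∀ x : Fin n → ℝ, x ≠ 0 → 0 < tensorApply B x

/-- `(B x^{m-1})_i = Σ_{i₂,…,i_m} b_{i i₂ ⋯ i_m} x_{i₂} ⋯ x_{i_m}`. -/
def rowApply {m n : ℕ} (B : (Fin m → Fin n) → ℝ) (x : Fin n → ℝ) (i : Fin n) : ℝ :=
  ∑ α ∈ rowSet m n i, B α * ∏ t ∈ Finset.univ.filter (fun t : Fin m => (t : ℕ) ≠ 0), x (α t)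

/-- `B` is a P-tensor: for every nonzero `x`, `max_i x_i (B x^{m-1})_i > 0`. -/
def IsPTensor {m n : ℕ} (B : (Fin m → Fin n) → ℝ) : Prop :=
  ∀ x : Fin n → ℝ, x ≠ 0 → ∃ i, 0 < x i * rowApply B x i

/-- `lam` is an H-eigenvalue of `B`. -/
def IsHEigenvalue {m n : ℕ} (B : (Fin m → Fin n) → ℝ) (lam : ℝ) : Prop :=
  ∃ x : Fin n → ℝ, x ≠ 0 ∧ ∀ i, rowApply B x i = lam * x i ^ (m - 1)

/-- The partially all one tensor `ε^J`: entry `1` if all indices lie in `J`, else `0`. -/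
def epsTensor (m n : ℕ) (J : Finset (Fin n)) : (Fin m → Fin n) → ℝ :=
  fun α => if ∀ t, α t ∈ J then 1 else 0

section Stmt16Aux

open Finset

variable {m n : ℕ}

private lemma fin_zero_eq (hm : 0 < m) {t : Fin m} (ht : (t : ℕ) = 0) : t = ⟨0, hm⟩ :=
  Fin.ext ht

private lemma mem_rowSet (hm : 0 < m) {i : Fin n} {α : Fin m → Fin n} :
    α ∈ rowSet m n i ↔ α ⟨0, hm⟩ = i := by
  simp only [rowSet, mem_filter, mem_univ, true_and]
  exact ⟨fun h => h _ rfl, fun h t ht => by rw [fin_zero_eq hm ht]; exact h⟩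

private lemma mem_offRowSet (hm : 0 < m) {i : Fin n} {α : Fin m → Fin n} :
    α ∈ offRowSet m n i ↔ α ⟨0, hm⟩ = i ∧ α ≠ fun _ => i := by
  simp only [offRowSet, mem_filter, mem_univ, true_and]
  constructor
  · rintro ⟨h1, h2⟩; exact ⟨h1 _ rfl, h2⟩
  · rintro ⟨h1, h2⟩
    exact ⟨fun t ht => by rw [fin_zero_eq hm ht]; exact h1, h2⟩

private lemma betaMax_nonneg (B : (Fin m → Fin n) → ℝ) (i : Fin n) : 0 ≤ betaMax B i := by
  unfold betaMax
  rw [Finset.le_fold_max]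
  exact Or.inl le_rfl

private lemma le_betaMax {B : (Fin m → Fin n) → ℝ} {i : Fin n} {α : Fin m → Fin n}
    (h : α ∈ offRowSet m n i) : B α ≤ betaMax B i := by
  unfold betaMax
  rw [Finset.le_fold_max]
  exact Or.inr ⟨α, h, le_rfl⟩

/-- The set of non-constant index tuples. -/
private def nonconst (m n : ℕ) : Finset (Fin m → Fin n) :=
  univ.filter fun α => ∃ s t, α s ≠ α t

private lemma mem_nonconst {α : Fin m → Fin n} :
    α ∈ nonconst m n ↔ ∃ s t, α s ≠ α t := by
  simp [nonconst]

private lemma offRowSet_eq (hm : 0 < m) (i : Fin n) :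
    offRowSet m n i = (nonconst m n).filter fun α => α ⟨0, hm⟩ = i := by
  ext α
  simp only [mem_offRowSet hm, mem_filter, mem_nonconst]
  constructor
  · rintro ⟨h1, h2⟩
    refine ⟨?_, h1⟩
    by_contra hc
    push_neg at hc
    exact h2 (funext fun s => (hc s ⟨0, hm⟩).trans h1)
  · rintro ⟨⟨s, t, hst⟩, h1⟩
    refine ⟨h1, fun hc => hst ?_⟩
    rw [hc]

private lemma sum_split (hm : 0 < m) (f : (Fin m → Fin n) → ℝ) :
    ∑ α : Fin m → Fin n, f α
      = (∑ α ∈ nonconst m n, f α) + ∑ j : Fin n, f (fun _ => j) := by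
  classical
  rw [← Finset.sum_filter_add_sum_filter_not univ (fun α => ∃ s t, α s ≠ α t) f]
  congr 1
  refine Finset.sum_nbij' (fun α => α ⟨0, hm⟩) (fun j => fun _ => j) ?_ ?_ ?_ ?_ ?_
  · intro a _; exact mem_univ _
  · intro j _
    simp only [mem_filter, mem_univ, true_and]
    push_neg
    intro s t; rfl
  · intro a ha
    simp only [mem_filter, mem_univ, true_and] at ha
    push_neg at ha
    exact funext fun s => ha ⟨0, hm⟩ s
  · intro j _; rfl
  · intro a ha
    simp only [mem_filter, mem_univ, true_and] at ha
    push_neg at ha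
    congr 1
    exact funext fun s => ha s ⟨0, hm⟩

private lemma inf'_sub_const {ι : Type*} (s : Finset ι) (hs : s.Nonempty) (f : ι → ℝ) (c : ℝ) :
    s.inf' hs (fun a => f a - c) = s.inf' hs f - c := by
  apply le_antisymm
  · obtain ⟨a, ha, hfa⟩ := Finset.exists_mem_eq_inf' hs f
    calc s.inf' hs (fun a => f a - c) ≤ f a - c := Finset.inf'_le (fun a => f a - c) ha
      _ = _ := by rw [hfa]
  · obtain ⟨a, ha, hfa⟩ := Finset.exists_mem_eq_inf' hs (fun a => f a - c)
    rw [hfa]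
    exact sub_le_sub_right (Finset.inf'_le f ha) c

private lemma inf'_perm (hm : 0 < m) (g : Fin m → ℝ) (σ : Equiv.Perm (Fin m)) :
    (univ : Finset (Fin m)).inf' ⟨⟨0, hm⟩, mem_univ _⟩ (fun t => g (σ t))
      = (univ : Finset (Fin m)).inf' ⟨⟨0, hm⟩, mem_univ _⟩ g := by
  apply le_antisymm
  · apply Finset.le_inf'
    intro t _
    have := Finset.inf'_le (fun t => g (σ t)) (mem_univ (σ.symm t))
    simpa using this
  · apply Finset.le_inf'
    intro t _
    exact Finset.inf'_le g (mem_univ (σ t))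

/-- positivity of the "min-of-β" part, by induction on the support. -/
private lemma lemW (hm : 0 < m) (hme : Even m) (x : Fin n → ℝ) :
    ∀ (J : Finset (Fin n)) (g : Fin n → ℝ), (∀ k ∈ J, 0 ≤ g k) →
      0 ≤ ∑ α ∈ Fintype.piFinset (fun _ : Fin m => J),
        ((univ : Finset (Fin m)).inf' ⟨⟨0, hm⟩, mem_univ _⟩ fun t => g (α t))
          * ∏ t, x (α t) := by
  intro J
  induction J using Finset.strongInduction with
  | _ J ih =>
    intro g hg
    rcases J.eq_empty_or_nonempty with rfl | hJ
    · have hempty : Fintype.piFinset (fun _ : Fin m => (∅ : Finset (Fin n))) = ∅ := by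
        ext α
        simp only [Fintype.mem_piFinset, Finset.notMem_empty, iff_false, not_forall]
        exact ⟨⟨0, hm⟩, fun h => h⟩
      rw [hempty, Finset.sum_empty]
    · set v := J.inf' hJ g with hv
      have hv0 : 0 ≤ v := Finset.le_inf' hJ g fun k hk => hg k hk
      set J' := J.filter (fun k => v < g k) with hJ'
      have hsub : J' ⊆ J := Finset.filter_subset _ _
      have hss : J' ⊂ J := by
        obtain ⟨k₀, hk₀, hk₀v⟩ := Finset.exists_mem_eq_inf' hJ g
        refine Finset.ssubset_iff_of_subset hsub |>.2 ⟨k₀, hk₀, ?_⟩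
        simp only [hJ', mem_filter]
        rintro ⟨-, hlt⟩
        rw [← hk₀v] at hlt
        exact lt_irrefl _ hlt
      have hle : ∀ α ∈ Fintype.piFinset (fun _ : Fin m => J), ∀ t : Fin m, v ≤ g (α t) := by
        intro α hα t
        exact Finset.inf'_le g (Fintype.mem_piFinset.1 hα t)
      have hsplit : ∑ α ∈ Fintype.piFinset (fun _ : Fin m => J),
            ((univ : Finset (Fin m)).inf' ⟨⟨0, hm⟩, mem_univ _⟩ fun t => g (α t))
              * ∏ t, x (α t)
          = v * (∑ k ∈ J, x k) ^ m
            + ∑ α ∈ Fintype.piFinset (fun _ : Fin m => J'),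
                ((univ : Finset (Fin m)).inf' ⟨⟨0, hm⟩, mem_univ _⟩
                  fun t => (g (α t) - v)) * ∏ t, x (α t) := by
        have e1 : ∀ α : Fin m → Fin n,
            ((univ : Finset (Fin m)).inf' ⟨⟨0, hm⟩, mem_univ _⟩ fun t => g (α t))
              = v + ((univ : Finset (Fin m)).inf' ⟨⟨0, hm⟩, mem_univ _⟩
                  fun t => (g (α t) - v)) := by
          intro α
          linarith [inf'_sub_const (univ : Finset (Fin m)) ⟨⟨0, hm⟩, mem_univ _⟩ (fun t => g (α t)) v]
        calc ∑ α ∈ Fintype.piFinset (fun _ : Fin m => J),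
              ((univ : Finset (Fin m)).inf' ⟨⟨0, hm⟩, mem_univ _⟩ fun t => g (α t))
                * ∏ t, x (α t)
            = ∑ α ∈ Fintype.piFinset (fun _ : Fin m => J),
              (v * ∏ t, x (α t)
                + ((univ : Finset (Fin m)).inf' ⟨⟨0, hm⟩, mem_univ _⟩
                    fun t => (g (α t) - v)) * ∏ t, x (α t)) := by
              apply Finset.sum_congr rfl
              intro α _
              rw [e1 α]; ring
          _ = v * ∑ α ∈ Fintype.piFinset (fun _ : Fin m => J), ∏ t, x (α t)
              + ∑ α ∈ Fintype.piFinset (fun _ : Fin m => J),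
                  ((univ : Finset (Fin m)).inf' ⟨⟨0, hm⟩, mem_univ _⟩
                      fun t => (g (α t) - v)) * ∏ t, x (α t) := by
              rw [Finset.sum_add_distrib, Finset.mul_sum]
          _ = _ := by
              congr 1
              · congr 1
                rw [← Finset.prod_univ_sum (fun _ : Fin m => J) (fun _ k => x k)]
                rw [Finset.prod_const, Finset.card_univ, Fintype.card_fin]
              · rw [Finset.sum_subset
                  (Fintype.piFinset_subset _ _ (fun _ => hsub))]
                intro α hα hα'
                have : ∃ t : Fin m, α t ∉ J' := by
                  by_contra hc
                  push_neg at hc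
                  exact hα' (Fintype.mem_piFinset.2 hc)
                obtain ⟨t₀, ht₀⟩ := this
                have h1 : g (α t₀) ≤ v := by
                  have hmem : α t₀ ∈ J := Fintype.mem_piFinset.1 hα t₀
                  by_contra hc
                  push_neg at hc
                  exact ht₀ (by simp [hJ', hmem, hc])
                have h2 : ((univ : Finset (Fin m)).inf' ⟨⟨0, hm⟩, mem_univ _⟩
                    fun t => (g (α t) - v)) = 0 := by
                  apply le_antisymm
                  · calc _ ≤ g (α t₀) - v :=
                        Finset.inf'_le (fun t => g (α t) - v) (mem_univ t₀)
                      _ ≤ 0 := by linarith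
                  · apply Finset.le_inf'
                    intro t _
                    have := hle α hα t
                    linarith
                rw [h2, zero_mul]
      rw [hsplit]
      have h1 : 0 ≤ v * (∑ k ∈ J, x k) ^ m :=
        mul_nonneg hv0 (hme.pow_nonneg _)
      have h2 := ih J' hss (fun k => g k - v) (fun k hk => by
        simp only [hJ', mem_filter] at hk
        show 0 ≤ g k - v
        linarith [hk.2])
      linarith

/-- AM-GM: `|∏ y_t| ≤ (1/m) ∑ y_t ^ m` for even `m`. -/
private lemma abs_prod_le (hm : 0 < m) (hme : Even m) (y : Fin m → ℝ) :
    |∏ t, y t| ≤ (1 / m) * ∑ t, y t ^ m := by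
  have hm' : (m : ℝ) ≠ 0 := Nat.cast_ne_zero.2 hm.ne'
  have key := Real.geom_mean_le_arith_mean_weighted univ (fun _ : Fin m => 1 / (m : ℝ))
      (fun t => |y t| ^ m) (fun i _ => by positivity)
      (by rw [Finset.sum_const, Finset.card_univ, Fintype.card_fin, nsmul_eq_mul]
          field_simp)
      (fun i _ => by positivity)
  have h2 : ∀ t : Fin m, ((|y t| ^ m : ℝ)) ^ ((1 : ℝ) / m) = |y t| := by
    intro t
    rw [← Real.rpow_natCast |y t| m, ← Real.rpow_mul (abs_nonneg _),
      mul_one_div_cancel hm', Real.rpow_one]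
  calc |∏ t, y t| = ∏ t, |y t| := Finset.abs_prod _ _
    _ = ∏ t, ((|y t| ^ m : ℝ)) ^ ((1 : ℝ) / m) := by
        exact Finset.prod_congr rfl fun t _ => (h2 t).symm
    _ ≤ ∑ t, (1 / (m : ℝ)) * |y t| ^ m := key
    _ = (1 / m) * ∑ t, y t ^ m := by
        rw [Finset.mul_sum]
        exact Finset.sum_congr rfl fun t _ => by rw [hme.pow_abs]

end Stmt16Aux

section Stmt16Main

open Finset

variable {m n : ℕ}

private lemma rowSet_eq (hm : 0 < m) (i : Fin n) :
    rowSet m n i = univ.filter fun α : Fin m → Fin n => α ⟨0, hm⟩ = i := by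
  ext α
  simp only [mem_rowSet hm, mem_filter, mem_univ, true_and]

private lemma filter_ne_zero (hm : 0 < m) :
    (univ.filter fun t : Fin m => (t : ℕ) ≠ 0) = univ.erase ⟨0, hm⟩ := by
  ext t
  simp only [mem_filter, mem_univ, true_and, mem_erase, and_true]
  rw [Ne, Ne, ← Fin.ext_iff (b := (⟨0, hm⟩ : Fin m))]

private lemma x_mul_rowApply (hm : 0 < m) (B : (Fin m → Fin n) → ℝ) (x : Fin n → ℝ)
    (i : Fin n) :
    x i * rowApply B x i = ∑ α ∈ rowSet m n i, B α * ∏ t, x (α t) := by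
  rw [rowApply, Finset.mul_sum]
  refine Finset.sum_congr rfl fun α hα => ?_
  have h0 : α ⟨0, hm⟩ = i := (mem_rowSet hm).1 hα
  rw [filter_ne_zero hm,
    ← Finset.mul_prod_erase univ (fun t => x (α t)) (mem_univ (⟨0, hm⟩ : Fin m)), h0]
  ring

private lemma sum_rowApply (hm : 0 < m) (B : (Fin m → Fin n) → ℝ) (x : Fin n → ℝ) :
    ∑ i, x i * rowApply B x i = tensorApply B x := by
  rw [tensorApply,
    ← Finset.sum_fiberwise univ (fun α : Fin m → Fin n => α ⟨0, hm⟩)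
      (fun α => B α * ∏ t, x (α t))]
  refine Finset.sum_congr rfl fun i _ => ?_
  rw [x_mul_rowApply hm, rowSet_eq hm]

private lemma rowApply_single (hm : 0 < m) (B : (Fin m → Fin n) → ℝ) (x : Fin n → ℝ)
    (k : Fin n) (hx : ∀ j, j ≠ k → x j = 0) :
    rowApply B x k = diagEntry B k * x k ^ (m - 1) := by
  rw [rowApply]
  have hsplit : rowSet m n k = insert (fun _ => k) (offRowSet m n k) := by
    ext α
    simp only [mem_insert, mem_rowSet hm, mem_offRowSet hm]
    constructor
    · intro h
      by_cases hc : α = fun _ => k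
      · exact Or.inl hc
      · exact Or.inr ⟨h, hc⟩
    · rintro (rfl | ⟨h, -⟩)
      · rfl
      · exact h
  rw [hsplit, Finset.sum_insert (fun hmem => ((mem_offRowSet hm).1 hmem).2 rfl)]
  have hzero : ∑ α ∈ offRowSet m n k,
      B α * ∏ t ∈ univ.filter (fun t : Fin m => (t : ℕ) ≠ 0), x (α t) = 0 := by
    apply Finset.sum_eq_zero
    intro α hα
    obtain ⟨h0, hne⟩ := (mem_offRowSet hm).1 hα
    have hex : ∃ s, α s ≠ k := by
      by_contra hc; push_neg at hc; exact hne (funext hc)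
    obtain ⟨s, hs⟩ := hex
    have hsz : s ≠ ⟨0, hm⟩ := fun h => hs (h ▸ h0)
    rw [Finset.prod_eq_zero (i := s) ?_ (hx _ hs), mul_zero]
    rw [filter_ne_zero hm]
    exact Finset.mem_erase.2 ⟨hsz, mem_univ _⟩
  rw [hzero, add_zero, filter_ne_zero hm]
  show B (fun _ => k) * _ = _
  rw [Finset.prod_const, Finset.card_erase_of_mem (mem_univ _), Finset.card_univ,
    Fintype.card_fin]
  rfl

/-- The key inequality: `∑ (c_i - Δ_i) x_i^m ≤ B x^m` for a symmetric tensor. -/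
private lemma key_ineq (hm : 0 < m) (hme : Even m) (B : (Fin m → Fin n) → ℝ)
    (hsym : IsSymmetricTensor B) (x : Fin n → ℝ) :
    ∑ i, (diagEntry B i - betaMax B i - DeltaSum B i) * x i ^ m ≤ tensorApply B x := by
  classical
  have hm' : (m : ℝ) ≠ 0 := Nat.cast_ne_zero.2 hm.ne'
  set P : (Fin m → Fin n) → ℝ := fun α => ∏ t, x (α t) with hPdef
  set w : (Fin m → Fin n) → ℝ :=
    fun α => (univ : Finset (Fin m)).inf' ⟨⟨0, hm⟩, mem_univ _⟩
      (fun t => betaMax B (α t)) with hwdef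
  have hPconst : ∀ j : Fin n, P (fun _ => j) = x j ^ m := by
    intro j
    simp only [hPdef]
    rw [Finset.prod_const, Finset.card_univ, Fintype.card_fin]
  have hwconst : ∀ j : Fin n, w (fun _ => j) = betaMax B j := by
    intro j
    simp only [hwdef]
    exact Finset.inf'_const _ _
  -- decomposition of tensorApply
  have hdecomp : tensorApply B x
      = (∑ α ∈ nonconst m n, (B α - w α) * P α)
        + (∑ α : Fin m → Fin n, w α * P α)
        + ∑ j, (diagEntry B j - betaMax B j) * x j ^ m := by
    have h1 : tensorApply B x
        = (∑ α ∈ nonconst m n, B α * P α) + ∑ j, diagEntry B j * x j ^ m := by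
      rw [tensorApply, sum_split hm (fun α => B α * P α)]
      congr 1
      exact Finset.sum_congr rfl fun j _ => by rw [hPconst j]; rfl
    have h2 : (∑ α : Fin m → Fin n, w α * P α)
        = (∑ α ∈ nonconst m n, w α * P α) + ∑ j, betaMax B j * x j ^ m := by
      rw [sum_split hm (fun α => w α * P α)]
      congr 1
      exact Finset.sum_congr rfl fun j _ => by rw [hPconst j, hwconst j]
    have e1 : ∑ α ∈ nonconst m n, (B α - w α) * P α
        = (∑ α ∈ nonconst m n, B α * P α) - ∑ α ∈ nonconst m n, w α * P α := by
      rw [← Finset.sum_sub_distrib]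
      exact Finset.sum_congr rfl fun α _ => sub_mul _ _ _
    have e2 : ∑ j, (diagEntry B j - betaMax B j) * x j ^ m
        = (∑ j, diagEntry B j * x j ^ m) - ∑ j, betaMax B j * x j ^ m := by
      rw [← Finset.sum_sub_distrib]
      exact Finset.sum_congr rfl fun j _ => sub_mul _ _ _
    rw [h1, h2, e1, e2]
    ring
  -- the W part is nonnegative
  have hW : 0 ≤ ∑ α : Fin m → Fin n, w α * P α := by
    have h := lemW hm hme x univ (betaMax B) (fun k _ => betaMax_nonneg B k)
    rw [Fintype.piFinset_univ] at h
    exact h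
  -- B α ≤ w α on nonconstant tuples, by symmetry
  have hBw : ∀ α ∈ nonconst m n, B α ≤ w α := by
    intro α hα
    apply Finset.le_inf'
    intro t _
    have hs : B (α ∘ Equiv.swap ⟨0, hm⟩ t) = B α := hsym _ α
    have hmem : (α ∘ Equiv.swap ⟨0, hm⟩ t) ∈ offRowSet m n (α t) := by
      rw [mem_offRowSet hm]
      constructor
      · show α (Equiv.swap ⟨0, hm⟩ t ⟨0, hm⟩) = α t
        rw [Equiv.swap_apply_left]
      · intro hc
        obtain ⟨s₁, s₂, hne'⟩ := mem_nonconst.1 hα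
        apply hne'
        have hconst : ∀ s, α s = α t := fun s => by
          have h := congrFun hc ((Equiv.swap ⟨0, hm⟩ t) s)
          simpa [Equiv.swap_apply_self] using h
        rw [hconst s₁, hconst s₂]
    calc B α = B (α ∘ Equiv.swap ⟨0, hm⟩ t) := hs.symm
      _ ≤ betaMax B (α t) := le_betaMax hmem
  -- lower bound for the Z part
  have hZ : -(∑ j, DeltaSum B j * x j ^ m) ≤ ∑ α ∈ nonconst m n, (B α - w α) * P α := by
    have step1 : ∑ α ∈ nonconst m n, (B α - w α) * ((1 / m) * ∑ t, x (α t) ^ m)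
        ≤ ∑ α ∈ nonconst m n, (B α - w α) * P α := by
      apply Finset.sum_le_sum
      intro α hα
      apply mul_le_mul_of_nonpos_left ?_ (by linarith [hBw α hα] : B α - w α ≤ 0)
      calc P α ≤ |P α| := le_abs_self _
        _ ≤ (1 / m) * ∑ t, x (α t) ^ m := abs_prod_le hm hme (fun t => x (α t))
    have step2 : ∑ α ∈ nonconst m n, (B α - w α) * ((1 / m) * ∑ t, x (α t) ^ m)
        = (1 / (m : ℝ)) * ∑ t : Fin m,
            ∑ α ∈ nonconst m n, (B α - w α) * x (α t) ^ m := by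
      calc ∑ α ∈ nonconst m n, (B α - w α) * ((1 / m) * ∑ t, x (α t) ^ m)
          = ∑ α ∈ nonconst m n, (1 / (m : ℝ)) * ∑ t, (B α - w α) * x (α t) ^ m := by
            refine Finset.sum_congr rfl fun α _ => ?_
            rw [mul_left_comm, Finset.mul_sum]
        _ = (1 / (m : ℝ)) * ∑ α ∈ nonconst m n, ∑ t, (B α - w α) * x (α t) ^ m := by
            rw [Finset.mul_sum]
        _ = _ := by rw [Finset.sum_comm]
    have step3 : ∀ t : Fin m, ∑ α ∈ nonconst m n, (B α - w α) * x (α t) ^ m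
        = ∑ α ∈ nonconst m n, (B α - w α) * x (α ⟨0, hm⟩) ^ m := by
      intro t
      refine Finset.sum_nbij' (fun α => α ∘ Equiv.swap ⟨0, hm⟩ t)
        (fun α => α ∘ Equiv.swap ⟨0, hm⟩ t) ?_ ?_ ?_ ?_ ?_
      · intro α hα
        rw [mem_nonconst] at hα ⊢
        obtain ⟨s₁, s₂, h⟩ := hα
        exact ⟨Equiv.swap ⟨0, hm⟩ t s₁, Equiv.swap ⟨0, hm⟩ t s₂,
          by simpa [Equiv.swap_apply_self] using h⟩
      · intro α hα
        rw [mem_nonconst] at hα ⊢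
        obtain ⟨s₁, s₂, h⟩ := hα
        exact ⟨Equiv.swap ⟨0, hm⟩ t s₁, Equiv.swap ⟨0, hm⟩ t s₂,
          by simpa [Equiv.swap_apply_self] using h⟩
      · intro α _
        funext s
        show α (Equiv.swap ⟨0, hm⟩ t (Equiv.swap ⟨0, hm⟩ t s)) = α s
        rw [Equiv.swap_apply_self]
      · intro α _
        funext s
        show α (Equiv.swap ⟨0, hm⟩ t (Equiv.swap ⟨0, hm⟩ t s)) = α s
        rw [Equiv.swap_apply_self]
      · intro α hα
        have hBs : B (α ∘ Equiv.swap ⟨0, hm⟩ t) = B α := hsym _ α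
        have hws : w (α ∘ Equiv.swap ⟨0, hm⟩ t) = w α := by
          simp only [hwdef]
          exact inf'_perm hm (fun t' => betaMax B (α t')) (Equiv.swap ⟨0, hm⟩ t)
        have hxs : x ((α ∘ Equiv.swap ⟨0, hm⟩ t) ⟨0, hm⟩) = x (α t) := by
          show x (α (Equiv.swap ⟨0, hm⟩ t ⟨0, hm⟩)) = x (α t)
          rw [Equiv.swap_apply_left]
        rw [hBs, hws, hxs]
    have step4 : -(∑ j, DeltaSum B j * x j ^ m)
        ≤ ∑ α ∈ nonconst m n, (B α - w α) * x (α ⟨0, hm⟩) ^ m := by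
      rw [← Finset.sum_fiberwise (nonconst m n) (fun α => α ⟨0, hm⟩)
        (fun α => (B α - w α) * x (α ⟨0, hm⟩) ^ m), ← Finset.sum_neg_distrib]
      apply Finset.sum_le_sum
      intro j _
      rw [← offRowSet_eq hm j]
      have hrw : ∑ α ∈ offRowSet m n j, (B α - w α) * x (α ⟨0, hm⟩) ^ m
          = (∑ α ∈ offRowSet m n j, (B α - w α)) * x j ^ m := by
        rw [Finset.sum_mul]
        refine Finset.sum_congr rfl fun α hα => ?_
        rw [((mem_offRowSet hm).1 hα).1]
      rw [hrw]
      have hΔ : -(DeltaSum B j) ≤ ∑ α ∈ offRowSet m n j, (B α - w α) := by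
        rw [DeltaSum, ← Finset.sum_neg_distrib]
        apply Finset.sum_le_sum
        intro α hα
        have hwle : w α ≤ betaMax B j := by
          have h0 : α ⟨0, hm⟩ = j := ((mem_offRowSet hm).1 hα).1
          calc w α ≤ betaMax B (α ⟨0, hm⟩) :=
                Finset.inf'_le (fun t => betaMax B (α t)) (mem_univ _)
            _ = betaMax B j := by rw [h0]
        show -(betaMax B j - B α) ≤ B α - w α
        linarith
      calc -(DeltaSum B j * x j ^ m) = (-(DeltaSum B j)) * x j ^ m := by ring
        _ ≤ (∑ α ∈ offRowSet m n j, (B α - w α)) * x j ^ m :=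
            mul_le_mul_of_nonneg_right hΔ (hme.pow_nonneg _)
    calc -(∑ j, DeltaSum B j * x j ^ m)
        ≤ ∑ α ∈ nonconst m n, (B α - w α) * x (α ⟨0, hm⟩) ^ m := step4
      _ = (1 / (m : ℝ)) * ∑ t : Fin m,
            ∑ α ∈ nonconst m n, (B α - w α) * x (α t) ^ m := by
          rw [Finset.sum_congr rfl (fun t _ => step3 t), Finset.sum_const,
            Finset.card_univ, Fintype.card_fin, nsmul_eq_mul, ← mul_assoc,
            one_div_mul_cancel hm', one_mul]
      _ = ∑ α ∈ nonconst m n, (B α - w α) * ((1 / m) * ∑ t, x (α t) ^ m) := step2.symm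
      _ ≤ ∑ α ∈ nonconst m n, (B α - w α) * P α := step1
  -- combine
  have efin : ∑ i, (diagEntry B i - betaMax B i - DeltaSum B i) * x i ^ m
      = (∑ j, (diagEntry B j - betaMax B j) * x j ^ m) - ∑ j, DeltaSum B j * x j ^ m := by
    rw [← Finset.sum_sub_distrib]
    exact Finset.sum_congr rfl fun j _ => by ring
  rw [efin, hdecomp]
  linarith

end Stmt16Main

/-- every H-eigenvalue of an even order symmetric double B-tensor is
positive. -/
theorem stmt16 (m n : ℕ) (hm : 0 < m) (hme : Even m) (hn : 2 ≤ n)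
    (B : (Fin m → Fin n) → ℝ) (hsym : IsSymmetricTensor B)
    (hB : IsDoubleBTensor B) :
    ∀ lam : ℝ, IsHEigenvalue B lam → 0 < lam := by
  obtain ⟨hb1, hb2, hb3⟩ := hB
  rintro lam ⟨x, hx0, heig⟩
  have hm1 : m - 1 + 1 = m := Nat.succ_pred_eq_of_pos hm
  have hsum : lam * ∑ i, x i ^ m = tensorApply B x := by
    rw [← sum_rowApply hm B x, Finset.mul_sum]
    refine Finset.sum_congr rfl fun i _ => ?_
    have hp : x i ^ m = x i ^ (m - 1) * x i := by rw [← pow_succ, hm1]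
    rw [heig i, hp]
    ring
  have hex : ∃ i, x i ≠ 0 := by
    by_contra hc
    push_neg at hc
    exact hx0 (funext hc)
  obtain ⟨i₀, hi₀⟩ := hex
  have hxm : 0 < ∑ i, x i ^ m := by
    apply Finset.sum_pos'
    · intro i _
      exact hme.pow_nonneg _
    · exact ⟨i₀, Finset.mem_univ _, hme.pow_pos hi₀⟩
  by_contra hlam
  push_neg at hlam
  have hkey := key_ineq hm hme B hsym x
  have hmain : ∑ i, (diagEntry B i - betaMax B i - DeltaSum B i) * x i ^ m ≤ 0 := by
    calc ∑ i, (diagEntry B i - betaMax B i - DeltaSum B i) * x i ^ m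
        ≤ tensorApply B x := hkey
      _ = lam * ∑ i, x i ^ m := hsum.symm
      _ ≤ 0 * ∑ i, x i ^ m := mul_le_mul_of_nonneg_right hlam hxm.le
      _ = 0 := zero_mul _
  have hnonneg : ∀ i ∈ Finset.univ,
      0 ≤ (diagEntry B i - betaMax B i - DeltaSum B i) * x i ^ m :=
    fun i _ => mul_nonneg (by linarith [hb2 i]) (hme.pow_nonneg _)
  have hterm : ∀ i, (diagEntry B i - betaMax B i - DeltaSum B i) * x i ^ m = 0 :=
    fun i => (Finset.sum_eq_zero_iff_of_nonneg hnonneg).1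
      (le_antisymm hmain (Finset.sum_nonneg hnonneg)) i (Finset.mem_univ i)
  have hcrit : ∀ i, x i ≠ 0 → diagEntry B i - betaMax B i = DeltaSum B i := by
    intro i hxi
    rcases mul_eq_zero.1 (hterm i) with h | h
    · linarith [h]
    · exact absurd h (pow_ne_zero _ hxi)
  have hzero : ∀ j, j ≠ i₀ → x j = 0 := by
    intro j hj
    by_contra hxj
    have h1 := hcrit i₀ hi₀
    have h2 := hcrit j hxj
    have h3 := hb3 i₀ j (fun h => hj (h.symm))
    rw [h1, h2] at h3
    exact lt_irrefl _ h3
  have hrow := rowApply_single hm B x i₀ hzero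
  rw [heig i₀] at hrow
  have hdlam : lam = diagEntry B i₀ :=
    mul_right_cancel₀ (pow_ne_zero _ hi₀) hrow
  have hd : 0 < diagEntry B i₀ := lt_of_le_of_lt (betaMax_nonneg B i₀) (hb1 i₀)
  linarith
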